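/- arXiv:0812.3257 — 2 statements merged into one kernel-verified Lean document; each statement's English description precedes it below -/
import Mathlib

section
/- Let g be a Lie algebra over a field K of characteristic zero and let n ∈ ℕ. The symmetrization map sym : S_n(g) → U(g), defined by sym(x₁⋯xₙ) = (1/n!) Σ_{σ∈Sₙ} x_{σ(1)}⋯x_{σ(n)}, is an isomorphism of g-modules onto its image (a g-submodule of U(g)), where g acts on both sides by the derivation extension of the adjoint action. -/
attribute [local instance] LieRing.ofAssociativeRing

/-!
Let `V ⊆ U(g)` be the span of the symmetrized monomials of degree `n` and `F_{<n}` the span of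
products of fewer than `n` generators. Reordering a product of generators changes it by shorter
products, so a monomial minus its symmetrization lies in `F_{<n}` and `F_n = F_{<n} + V`; and
`ad x` acts on symmetrized monomials as a derivation, so `V` is a `g`-submodule.

The key point is `V ∩ F_{<n} = 0`, which we prove without PBW. Let `Δ⁽ⁿ⁾ : U → U^{⊗n}` send `ι x`
to `∑ᵢ 1 ⊗ ⋯ ⊗ ι x ⊗ ⋯ ⊗ 1`, let `π = id - ε` kill the constants, and let
`θ = μ ∘ π^{⊗n} ∘ Δ⁽ⁿ⁾`. Expanding `Δ⁽ⁿ⁾` of a monomial distributes its letters among the `n`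
slots; `π` kills every term with an empty slot. So `θ` vanishes on `F_{<n}`, while on a monomial of
length `n` only the terms with one letter per slot survive, and `θ` is multiplication by `n!` on
`V`. Hence `F_n / F_{<n} ≅ V`, and `sym` is the inverse of this isomorphism.
-/

open Function Submodule

theorem List.prod_ofFn_sum {R ι : Type*} [Semiring R] [Fintype ι] :
    ∀ {m : ℕ} (c : Fin m → ι → R),
      (List.ofFn fun j => ∑ i, c j i).prod = ∑ f : Fin m → ι, (List.ofFn fun j => c j (f j)).prod
  | 0, c => by simp
  | m + 1, c => by
    rw [← (Fin.consEquiv fun _ => ι).sum_comp, Fintype.sum_prod_type, List.ofFn_succ,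
      List.prod_cons, List.prod_ofFn_sum, Finset.sum_mul_sum]
    simp [Fin.consEquiv, List.ofFn_succ]

theorem List.prod_ofFn_mulSingle {M : Type*} [Monoid M] :
    ∀ {m : ℕ} (i : Fin m) (b : M), (List.ofFn (Pi.mulSingle i b)).prod = b
  | m + 1, i, b => by
    rw [List.ofFn_succ, List.prod_cons]
    cases i using Fin.cases with
    | zero => simp [Fin.succ_ne_zero]
    | succ i =>
      have : (fun j : Fin m => (Pi.mulSingle i.succ b : Fin (m + 1) → M) j.succ) =
          Pi.mulSingle i b := by
        ext j; simp [Pi.mulSingle_apply]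
      rw [Pi.mulSingle_eq_of_ne (Fin.succ_ne_zero i).symm, one_mul, this, List.prod_ofFn_mulSingle]

theorem List.prod_ofFn_mulSingle_perm {M : Type*} [Monoid M] {m : ℕ} (σ : Equiv.Perm (Fin m))
    (a : Fin m → M) (i : Fin m) :
    (List.ofFn fun j => (Pi.mulSingle (σ j) (a j) : Fin m → M) i).prod = a (σ.symm i) := by
  have : (fun j => (Pi.mulSingle (σ j) (a j) : Fin m → M) i) =
      Pi.mulSingle (σ.symm i) (a (σ.symm i)) := by
    ext j
    by_cases h : j = σ.symm i
    · subst h; simp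
    · rw [Pi.mulSingle_eq_of_ne h,
        Pi.mulSingle_eq_of_ne fun h' => h (by rw [h', Equiv.symm_apply_apply])]
  rw [this, List.prod_ofFn_mulSingle]

def LieHom.sumOfCommute {R L A ι : Type*} [CommRing R] [LieRing L] [LieAlgebra R L] [Ring A]
    [Algebra R A] [Fintype ι] (f : ι → L →ₗ⁅R⁆ A)
    (hf : Pairwise fun i j => ∀ x y, Commute (f i x) (f j y)) : L →ₗ⁅R⁆ A where
  toLinearMap := ∑ i, (f i).toLinearMap
  map_lie' {x y} := by
    simp only [AddHom.toFun_eq_coe, LinearMap.coe_toAddHom, LinearMap.sum_apply,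
      LieHom.coe_toLinearMap, sum_lie_sum, LieHom.map_lie]
    refine Finset.sum_congr rfl fun i _ =>
      (Finset.sum_eq_single (f := fun j => ⁅f i x, f j y⁆) i (fun j _ hji => ?_)
        (absurd (Finset.mem_univ i))).symm
    exact (commute_iff_lie_eq).1 (hf hji.symm x y)

theorem Submodule.exists_injective_quotient_section {R M : Type*} [Ring R] [AddCommGroup M]
    [Module R M] {A B V : Submodule R M} (hVB : Disjoint V B) (hA : A ≤ B ⊔ V) :
    ∃ s : (A ⧸ B.comap A.subtype) →ₗ[R] M, Injective s ∧
      ∀ (a : M) (ha : a ∈ A), ∀ v ∈ V, a - v ∈ B → s (Quotient.mk ⟨a, ha⟩) = v := by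
  let φ : V →ₗ[R] M ⧸ B := B.mkQ ∘ₗ V.subtype
  have hφ : Injective φ := by
    refine LinearMap.ker_eq_bot.1 (LinearMap.ker_eq_bot'.2 fun v hv => ?_)
    exact Subtype.ext (disjoint_def.1 hVB v v.2 ((Quotient.mk_eq_zero B).1 hv))
  let ψ : (A ⧸ B.comap A.subtype) →ₗ[R] M ⧸ B := (B.comap A.subtype).mapQ B A.subtype le_rfl
  have hψ : ∀ a (ha : a ∈ A), ∀ v (hv : v ∈ V), a - v ∈ B → ψ (Quotient.mk ⟨a, ha⟩) = φ ⟨v, hv⟩ :=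
    fun a ha v hv hav => (Quotient.eq B).2 hav
  have hψφ (z) : ψ z ∈ LinearMap.range φ := by
    obtain ⟨⟨a, ha⟩, rfl⟩ := Quotient.mk_surjective _ z
    obtain ⟨b, hb, v, hv, rfl⟩ := mem_sup.1 (hA ha)
    exact ⟨⟨v, hv⟩, (hψ _ ha v hv (by simpa using hb)).symm⟩
  let s := V.subtype ∘ₗ (LinearEquiv.ofInjective φ hφ).symm.toLinearMap ∘ₗ ψ.codRestrict _ hψφ
  have hs : ∀ (a : M) (ha : a ∈ A), ∀ v ∈ V, a - v ∈ B → s (Quotient.mk ⟨a, ha⟩) = v := by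
    intro a ha v hv hav
    have : ψ.codRestrict _ hψφ (Quotient.mk ⟨a, ha⟩) = LinearEquiv.ofInjective φ hφ ⟨v, hv⟩ :=
      Subtype.ext (hψ a ha v hv hav)
    simp [s, this]
  refine ⟨s, LinearMap.ker_eq_bot.1 (LinearMap.ker_eq_bot'.2 fun z hz => ?_), hs⟩
  obtain ⟨⟨a, ha⟩, rfl⟩ := Quotient.mk_surjective _ z
  obtain ⟨b, hb, v, hv, rfl⟩ := mem_sup.1 (hA ha)
  obtain rfl : v = 0 := (hs _ ha v hv (by simpa using hb)).symm.trans hz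
  exact (Quotient.mk_eq_zero _).2 (by simpa using hb)

namespace UniversalEnvelopingAlgebra

section Filtration

variable (K : Type*) [CommRing K] {g : Type*} [LieRing g] [LieAlgebra K g]

def ιProd {k : ℕ} (w : Fin k → g) : UniversalEnvelopingAlgebra K g :=
  (List.ofFn fun i => ι K (w i)).prod

variable (g) in
/-- The filtration step `F m` is `degreeLT (m + 1)`, and `degreeLT 0 = ⊥` is `F (-1)`. -/
def degreeLT (n : ℕ) : Submodule K (UniversalEnvelopingAlgebra K g) :=
  ⨆ k ∈ Finset.range n, span K (Set.range (ι K : g →ₗ⁅K⁆ _)) ^ k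

variable {K}

theorem ιProd_succ {k : ℕ} (w : Fin (k + 1) → g) :
    ιProd K w = ι K (w 0) * ιProd K (Fin.tail w) := by
  simp [ιProd, List.ofFn_succ, Fin.tail]

theorem ιProd_cons {k : ℕ} (x : g) (w : Fin k → g) :
    ιProd K (Fin.cons x w : Fin (k + 1) → g) = ι K x * ιProd K w := by
  simp [ιProd_succ]

theorem ιProd_eq_prod_map_ofFn {k : ℕ} (w : Fin k → g) :
    ιProd K w = ((List.ofFn w).map (ι K)).prod := by
  rw [List.map_ofFn]; rfl

theorem span_range_ι_pow (k : ℕ) :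
    span K (Set.range (ι K : g →ₗ⁅K⁆ _)) ^ k = span K (Set.range (ιProd K (k := k))) := by
  rw [span_pow]
  congr 1
  ext u
  rw [Set.mem_pow]
  exact Set.rangeFactorization_surjective.comp_left.exists
    (p := fun f : Fin k → Set.range (ι K : g →ₗ⁅K⁆ _) =>
      (List.ofFn fun i => (f i : UniversalEnvelopingAlgebra K g)).prod = u)

theorem degreeLT_zero : degreeLT K g 0 = ⊥ := by
  simp [degreeLT]

theorem ιProd_mem_degreeLT {k n : ℕ} (hk : k < n) (w : Fin k → g) : ιProd K w ∈ degreeLT K g n :=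
  mem_iSup_of_mem k <| mem_iSup_of_mem (Finset.mem_range.2 hk) <|
    span_range_ι_pow (K := K) (g := g) k ▸ subset_span ⟨w, rfl⟩

theorem degreeLT_le_iff {n : ℕ} {N : Submodule K (UniversalEnvelopingAlgebra K g)} :
    degreeLT K g n ≤ N ↔ ∀ k < n, ∀ w : Fin k → g, ιProd K w ∈ N := by
  refine ⟨fun h k hk w => h (ιProd_mem_degreeLT hk w), fun h => iSup₂_le fun k hk => ?_⟩
  rw [span_range_ι_pow, span_le]
  rintro _ ⟨w, rfl⟩
  exact h k (Finset.mem_range.1 hk) w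

theorem ι_mul_mem_degreeLT {n : ℕ} (x : g) {u : UniversalEnvelopingAlgebra K g}
    (hu : u ∈ degreeLT K g n) : ι K x * u ∈ degreeLT K g (n + 1) := by
  refine degreeLT_le_iff (N := (degreeLT K g (n + 1)).comap (LinearMap.mulLeft K (ι K x)))
    |>.2 (fun k hk w => ?_) hu
  rw [mem_comap, LinearMap.mulLeft_apply, ← ιProd_cons]
  exact ιProd_mem_degreeLT (by omega) _

theorem list_prod_map_ι_mem_degreeLT {n : ℕ} {l : List g} (hl : l.length < n) :
    (l.map (ι K)).prod ∈ degreeLT K g n := by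
  simpa [ιProd_eq_prod_map_ofFn] using ιProd_mem_degreeLT (K := K) hl l.get

theorem list_prod_map_ι_sub_mem_degreeLT_of_perm {l₁ l₂ : List g} (hp : l₁.Perm l₂) {n : ℕ}
    (hn : l₁.length ≤ n) : (l₁.map (ι K)).prod - (l₂.map (ι K)).prod ∈ degreeLT K g n := by
  induction hp generalizing n with
  | nil => simp
  | @cons x l₁ l₂ _ ih =>
    cases n with
    | zero => simp at hn
    | succ n => simpa [mul_sub] using ι_mul_mem_degreeLT x (ih (by simpa using hn))
  | swap x y l =>
    have h : ι K y * ι K x - ι K x * ι K y = ι K ⁅y, x⁆ := by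
      rw [LieHom.map_lie, Ring.lie_def]
    have := list_prod_map_ι_mem_degreeLT (K := K) (l := ⁅y, x⁆ :: l) (n := n)
      (by simp at hn ⊢; omega)
    simpa [← h, ← mul_assoc, sub_mul] using this
  | trans h₁₂ _ ih₁₂ ih₂₃ =>
    simpa using add_mem (ih₁₂ hn) (ih₂₃ (h₁₂.length_eq ▸ hn))

theorem lie_ι_ιProd (x : g) : ∀ {k : ℕ} (w : Fin k → g),
    ⁅ι K x, ιProd K w⁆ = ∑ j, ιProd K (update w j ⁅x, w j⁆)
  | 0, w => by simp [ιProd, Ring.lie_def]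
  | k + 1, w => by
    have hx : ⁅ι K x, ι K (w 0)⁆ = ι K ⁅x, w 0⁆ := (LieHom.map_lie _ _ _).symm
    have hsucc (j : Fin k) : ιProd K (update w j.succ ⁅x, w j.succ⁆) =
        ι K (w 0) * ιProd K (update (Fin.tail w) j ⁅x, Fin.tail w j⁆) := by
      rw [ιProd_succ, update_of_ne (Fin.succ_ne_zero j).symm, Fin.tail_update_succ]; rfl
    rw [Fin.sum_univ_succ, ιProd_succ, ιProd_succ, update_self, Fin.tail_update_zero]
    simp only [hsucc, ← Finset.mul_sum, ← lie_ι_ιProd x (Fin.tail w), ← hx, Ring.lie_def]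
    noncomm_ring

theorem lie_ι_mem_degreeLT (x : g) {n : ℕ} {u : UniversalEnvelopingAlgebra K g}
    (hu : u ∈ degreeLT K g n) : ⁅ι K x, u⁆ ∈ degreeLT K g n := by
  refine degreeLT_le_iff (N := (degreeLT K g n).comap (LieAlgebra.ad K _ (ι K x)))
    |>.2 (fun k hk w => ?_) hu
  rw [mem_comap, LieAlgebra.ad_apply, lie_ι_ιProd]
  exact sum_mem fun j _ => ιProd_mem_degreeLT hk _

end Filtration

section Symmetrization

open Equiv

variable (K : Type*) [Field K] {g : Type*} [LieRing g] [LieAlgebra K g] {n : ℕ}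

def symmetrize (w : Fin n → g) : UniversalEnvelopingAlgebra K g :=
  (n.factorial : K)⁻¹ • ∑ σ : Perm (Fin n), ιProd K (w ∘ σ)

variable (g n) in
def symmetrizationRange : Submodule K (UniversalEnvelopingAlgebra K g) :=
  span K (Set.range (symmetrize K (n := n) (g := g)))

variable {K}

theorem symmetrize_comp_perm (w : Fin n → g) (τ : Perm (Fin n)) :
    symmetrize K (w ∘ τ) = symmetrize K w := by
  simp only [symmetrize]
  congr 1
  exact Equiv.sum_comp (Equiv.mulLeft τ) fun σ => ιProd K (w ∘ σ)

theorem lie_ι_symmetrize (x : g) (w : Fin n → g) :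
    ⁅ι K x, symmetrize K w⁆ = ∑ i, symmetrize K (update w i ⁅x, w i⁆) := by
  have hσ (σ : Perm (Fin n)) : ⁅ι K x, ιProd K (w ∘ σ)⁆ =
      ∑ i, ιProd K (update w i ⁅x, w i⁆ ∘ σ) := by
    rw [lie_ι_ιProd, ← Equiv.sum_comp σ fun i => ιProd K (update w i ⁅x, w i⁆ ∘ σ)]
    simp only [update_comp_equiv, Equiv.symm_apply_apply, comp_apply]
  simp only [symmetrize, lie_smul, lie_sum, hσ, Finset.smul_sum]
  exact Finset.sum_comm

theorem lie_ι_mem_symmetrizationRange (x : g) {u : UniversalEnvelopingAlgebra K g}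
    (hu : u ∈ symmetrizationRange K g n) : ⁅ι K x, u⁆ ∈ symmetrizationRange K g n := by
  refine (span_le (p := (symmetrizationRange K g n).comap (LieAlgebra.ad K _ (ι K x)))).2
    ?_ hu
  rintro _ ⟨w, rfl⟩
  rw [SetLike.mem_coe, mem_comap, LieAlgebra.ad_apply, lie_ι_symmetrize]
  exact sum_mem fun i _ => subset_span ⟨_, rfl⟩

variable [CharZero K]

theorem sum_ιProd_comp_perm (w : Fin n → g) :
    ∑ σ : Perm (Fin n), ιProd K (w ∘ σ) = (n.factorial : K) • symmetrize K w := by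
  rw [symmetrize, smul_inv_smul₀ (Nat.cast_ne_zero.2 n.factorial_ne_zero)]

theorem ιProd_sub_symmetrize_mem_degreeLT (w : Fin n → g) :
    ιProd K w - symmetrize K w ∈ degreeLT K g n := by
  have h : ιProd K w - symmetrize K w =
      (n.factorial : K)⁻¹ • ∑ σ : Perm (Fin n), (ιProd K w - ιProd K (w ∘ σ)) := by
    rw [Finset.sum_sub_distrib, smul_sub, Finset.sum_const, Finset.card_univ, Fintype.card_perm,
      Fintype.card_fin, ← Nat.cast_smul_eq_nsmul K,
      inv_smul_smul₀ (Nat.cast_ne_zero.2 n.factorial_ne_zero), symmetrize]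
  rw [h]
  refine smul_mem _ _ (sum_mem fun σ _ => ?_)
  rw [ιProd_eq_prod_map_ofFn, ιProd_eq_prod_map_ofFn]
  exact list_prod_map_ι_sub_mem_degreeLT_of_perm (Perm.ofFn_comp_perm σ w).symm (by simp)

theorem degreeLT_succ_le_sup :
    degreeLT K g (n + 1) ≤ degreeLT K g n ⊔ symmetrizationRange K g n := by
  refine degreeLT_le_iff.2 fun k hk w => ?_
  rcases Nat.lt_succ_iff_lt_or_eq.1 hk with hk | rfl
  · exact mem_sup_left (ιProd_mem_degreeLT hk w)
  · rw [← sub_add_cancel (ιProd K w) (symmetrize K w)]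
    exact add_mem (mem_sup_left (ιProd_sub_symmetrize_mem_degreeLT w))
      (mem_sup_right (subset_span ⟨w, rfl⟩))

end Symmetrization

section ConvolutionPower

open PiTensorProduct Equiv
open scoped TensorProduct

variable (K : Type*) [CommRing K] (g : Type*) [LieRing g] [LieAlgebra K g] (n : ℕ)

def iterComul :
    UniversalEnvelopingAlgebra K g →ₐ[K] ⨂[K] (_ : Fin n), UniversalEnvelopingAlgebra K g :=
  lift K <| LieHom.sumOfCommute
    (fun i => (singleAlgHom (A := fun _ : Fin n => UniversalEnvelopingAlgebra K g) i).toLieHom.comp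
      (ι K))
    fun _ _ hij _ _ => (Pi.mulSingle_commute hij _ _).tprod

def counit : UniversalEnvelopingAlgebra K g →ₐ[K] K :=
  lift K 0

def augmentationProj : UniversalEnvelopingAlgebra K g →ₗ[K] UniversalEnvelopingAlgebra K g :=
  LinearMap.id - Algebra.linearMap K _ ∘ₗ (counit K g).toLinearMap

def augmentationConvPow : UniversalEnvelopingAlgebra K g →ₗ[K] UniversalEnvelopingAlgebra K g :=
  PiTensorProduct.lift ((MultilinearMap.mkPiAlgebraFin K n _).compLinearMap
    fun _ => augmentationProj K g) ∘ₗ (iterComul K g n).toLinearMap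

variable {K g n}

theorem iterComul_ι (x : g) :
    iterComul K g n (ι K x) = ∑ i, tprod K (Pi.mulSingle i (ι K x)) := by
  rw [iterComul, lift_ι_apply]
  exact (LinearMap.sum_apply _ _ _).trans (by simp)

theorem augmentationProj_one : augmentationProj K g 1 = 0 := by
  simp [augmentationProj]

theorem augmentationProj_ι (x : g) : augmentationProj K g (ι K x) = ι K x := by
  simp [augmentationProj, counit]

theorem augmentationConvPow_ιProd {k : ℕ} (w : Fin k → g) :
    augmentationConvPow K g n (ιProd K w) = ∑ f : Fin k → Fin n,
      (List.ofFn fun i => augmentationProj K g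
        (List.ofFn fun j => (Pi.mulSingle (f j) (ι K (w j)) : Fin n → _) i).prod).prod := by
  have hΔ : iterComul K g n (ιProd K w) = ∑ f : Fin k → Fin n,
      tprod K (List.ofFn fun j => (Pi.mulSingle (f j) (ι K (w j)) : Fin n → _)).prod := by
    simp only [ιProd, map_list_prod, List.map_ofFn, comp_def, iterComul_ι, List.prod_ofFn_sum]
    refine Finset.sum_congr rfl fun f _ => ?_
    rw [← tprodMonoidHom_apply, map_list_prod, List.map_ofFn]
    rfl
  rw [augmentationConvPow, LinearMap.comp_apply, AlgHom.toLinearMap_apply, hΔ, map_sum]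
  refine Finset.sum_congr rfl fun f _ => ?_
  rw [lift.tprod, MultilinearMap.compLinearMap_apply, MultilinearMap.mkPiAlgebraFin_apply]
  simp only [Pi.list_prod_apply, List.map_ofFn]
  rfl

theorem prod_ofFn_augmentationProj_eq_zero {k : ℕ} {f : Fin k → Fin n} (hf : ¬Surjective f)
    (a : Fin k → UniversalEnvelopingAlgebra K g) :
    (List.ofFn fun i => augmentationProj K g
      (List.ofFn fun j => (Pi.mulSingle (f j) (a j) : Fin n → _) i).prod).prod = 0 := by
  obtain ⟨i, hi⟩ := not_forall.1 hf
  refine List.prod_eq_zero (List.mem_ofFn.2 ⟨i, ?_⟩)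
  rw [List.prod_eq_one, augmentationProj_one]
  simp only [List.forall_mem_ofFn_iff]
  exact fun j => Pi.mulSingle_eq_of_ne (fun h => hi ⟨j, h.symm⟩) _

theorem augmentationConvPow_ιProd_of_lt {k : ℕ} (hk : k < n) (w : Fin k → g) :
    augmentationConvPow K g n (ιProd K w) = 0 := by
  rw [augmentationConvPow_ιProd]
  refine Finset.sum_eq_zero fun f _ => prod_ofFn_augmentationProj_eq_zero (fun hf => ?_) _
  have := Fintype.card_le_of_surjective f hf
  simp only [Fintype.card_fin] at this
  omega

theorem augmentationConvPow_ιProd_self (w : Fin n → g) :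
    augmentationConvPow K g n (ιProd K w) = ∑ σ : Perm (Fin n), ιProd K (w ∘ σ) := by
  rw [augmentationConvPow_ιProd]
  refine (Fintype.sum_of_injective (fun σ : Perm (Fin n) => ⇑σ.symm)
    (DFunLike.coe_injective.comp symm_bijective.injective) _ _ (fun f hf => ?_) fun σ => ?_).symm
  · refine prod_ofFn_augmentationProj_eq_zero (fun hsurj => hf ?_) _
    exact ⟨(ofBijective f ⟨Finite.injective_iff_surjective.2 hsurj, hsurj⟩).symm, by ext; rfl⟩
  · simp only [List.prod_ofFn_mulSingle_perm, symm_symm, augmentationProj_ι]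
    rfl

end ConvolutionPower

section Injectivity

variable {K : Type*} [Field K] [CharZero K] {g : Type*} [LieRing g] [LieAlgebra K g] {n : ℕ}

theorem augmentationConvPow_symmetrize (w : Fin n → g) :
    augmentationConvPow K g n (symmetrize K w) = (n.factorial : K) • symmetrize K w :=
  calc augmentationConvPow K g n (symmetrize K w)
      = (n.factorial : K)⁻¹ • ∑ τ : Equiv.Perm (Fin n), (n.factorial : K) • symmetrize K w := by
        conv_lhs => rw [symmetrize, map_smul, map_sum]
        simp only [augmentationConvPow_ιProd_self, sum_ιProd_comp_perm, symmetrize_comp_perm]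
    _ = (n.factorial : K) • symmetrize K w := by
        rw [← Finset.smul_sum, inv_smul_smul₀ (Nat.cast_ne_zero.2 n.factorial_ne_zero),
          Finset.sum_const, Finset.card_univ, Fintype.card_perm, Fintype.card_fin,
          Nat.cast_smul_eq_nsmul]

theorem disjoint_symmetrizationRange_degreeLT :
    Disjoint (symmetrizationRange K g n) (degreeLT K g n) := by
  refine disjoint_def.2 fun u hu hu' => ?_
  have hsym : augmentationConvPow K g n u = (n.factorial : K) • u :=
    LinearMap.eqOn_span' (g := (n.factorial : K) • LinearMap.id)
      (by rintro _ ⟨w, rfl⟩; exact augmentationConvPow_symmetrize w) hu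
  have hlow : augmentationConvPow K g n u = 0 :=
    degreeLT_le_iff (N := LinearMap.ker _).2 (fun _ hk w => augmentationConvPow_ιProd_of_lt hk w)
      hu'
  exact (smul_eq_zero.1 (hsym.symm.trans hlow)).resolve_left
    (Nat.cast_ne_zero.2 n.factorial_ne_zero)

end Injectivity

end UniversalEnvelopingAlgebra

open UniversalEnvelopingAlgebra

theorem symmetrization_gModule_iso_general
    (K : Type*) [Field K] [CharZero K]
    (g : Type*) [LieRing g] [LieAlgebra K g] (n : ℕ)
    (G : Submodule K (UniversalEnvelopingAlgebra K g))
    (hG : G = Submodule.span K (Set.range (UniversalEnvelopingAlgebra.ι K : g →ₗ⁅K⁆ _)))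
    (F : ℕ → Submodule K (UniversalEnvelopingAlgebra K g))
    (hF : ∀ m, F m = ⨆ k ∈ Finset.range (m + 1), G ^ k)
    -- the previous filtration step, with `F (-1) = 0`
    (Fprev : Submodule K (UniversalEnvelopingAlgebra K g))
    (hFprev : Fprev = Nat.rec ⊥ (fun m _ => F m) n) :
    ∃ sym : (↥(F n) ⧸ (Fprev.comap (F n).subtype)) →ₗ[K] UniversalEnvelopingAlgebra K g,
      Function.Injective sym ∧
      -- the defining formula on classes of monomials `x₁ ⋯ xₙ`
      (∀ (v : Fin n → g)
        (hv : (List.ofFn fun i => UniversalEnvelopingAlgebra.ι K (v i)).prod ∈ F n),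
        sym (Submodule.Quotient.mk ⟨_, hv⟩) =
          ((n.factorial : K)⁻¹) •
            ∑ σ : Equiv.Perm (Fin n),
              (List.ofFn fun i => UniversalEnvelopingAlgebra.ι K (v (σ i))).prod) ∧
      -- `g`-equivariance
      (∀ (x : g) (u : UniversalEnvelopingAlgebra K g) (hu : u ∈ F n)
        (hu' : UniversalEnvelopingAlgebra.ι K x * u - u * UniversalEnvelopingAlgebra.ι K x ∈ F n),
        sym (Submodule.Quotient.mk ⟨_, hu'⟩) =
          UniversalEnvelopingAlgebra.ι K x * sym (Submodule.Quotient.mk ⟨u, hu⟩)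
            - sym (Submodule.Quotient.mk ⟨u, hu⟩) * UniversalEnvelopingAlgebra.ι K x) := by
  have hF' : F = fun m => degreeLT K g (m + 1) := funext fun m => by rw [hF, hG]; rfl
  have hFprev' : Fprev = degreeLT K g n := by
    cases n with
    | zero => rw [hFprev, degreeLT_zero]; rfl
    | succ n => rw [hFprev, hF']
  subst hF' hFprev'
  obtain ⟨sym, hinj, hsym⟩ := Submodule.exists_injective_quotient_section
    (disjoint_symmetrizationRange_degreeLT (K := K) (g := g)) degreeLT_succ_le_sup
  refine ⟨sym, hinj, fun v hv => hsym _ hv _ (subset_span ⟨v, rfl⟩)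
    (ιProd_sub_symmetrize_mem_degreeLT v), fun x u hu hu' => ?_⟩
  obtain ⟨b, hb, v, hv, rfl⟩ := Submodule.mem_sup.1 (degreeLT_succ_le_sup hu)
  have hcomm : ι K x * (b + v) - (b + v) * ι K x - ⁅ι K x, v⁆ = ⁅ι K x, b⁆ := by
    simp only [Ring.lie_def]; noncomm_ring
  rw [hsym _ hu v hv (by simpa using hb)]
  exact hsym _ hu' _ (lie_ι_mem_symmetrizationRange x hv) (hcomm ▸ lie_ι_mem_degreeLT x hb)

/-- for a Lie algebra `g` over a field of characteristic zero and
`n : ℕ`, the symmetrization map `sym : S_n(g) → U(g)`, defined on the `n`-th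
graded piece `S_n(g) = F n / F (n-1)` of the filtration of `U(g)` by
`sym (x₁ ⋯ xₙ) = (1/n!) ∑_{σ ∈ Sₙ} x_{σ 1} ⋯ x_{σ n}`, exists, is injective
(hence an isomorphism onto its image), and is `g`-equivariant for the
derivation extension of the adjoint action (which on `U(g)` is
`u ↦ ι x * u - u * ι x`). -/
theorem symmetrization_gModule_iso
    (K : Type*) [Field K] [CharZero K]
    (g : Type*) [LieRing g] [LieAlgebra K g] (n : ℕ)
    (G : Submodule K (UniversalEnvelopingAlgebra K g))
    (hG : G = Submodule.span K (Set.range (UniversalEnvelopingAlgebra.ι K : g →ₗ⁅K⁆ _)))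
    (F : ℕ → Submodule K (UniversalEnvelopingAlgebra K g))
    (hF : ∀ m, F m = ⨆ k ∈ Finset.range (m + 1), G ^ k)
    -- the previous filtration step, with `F (-1) = 0`
    (Fprev : Submodule K (UniversalEnvelopingAlgebra K g))
    (hFprev : Fprev = Nat.rec ⊥ (fun m _ => F m) n)
    -- the adjoint action preserves each filtration step
    (hstab : ∀ (x : g), ∀ u ∈ F n,
      UniversalEnvelopingAlgebra.ι K x * u - u * UniversalEnvelopingAlgebra.ι K x ∈ F n) :
    ∃ sym : (↥(F n) ⧸ (Fprev.comap (F n).subtype)) →ₗ[K] UniversalEnvelopingAlgebra K g,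
      Function.Injective sym ∧
      -- the defining formula on classes of monomials `x₁ ⋯ xₙ`
      (∀ (v : Fin n → g)
        (hv : (List.ofFn fun i => UniversalEnvelopingAlgebra.ι K (v i)).prod ∈ F n),
        sym (Submodule.Quotient.mk ⟨_, hv⟩) =
          ((n.factorial : K)⁻¹) •
            ∑ σ : Equiv.Perm (Fin n),
              (List.ofFn fun i => UniversalEnvelopingAlgebra.ι K (v (σ i))).prod) ∧
      -- `g`-equivariance
      (∀ (x : g) (u : UniversalEnvelopingAlgebra K g) (hu : u ∈ F n)
        (hu' : UniversalEnvelopingAlgebra.ι K x * u - u * UniversalEnvelopingAlgebra.ι K x ∈ F n),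
        sym (Submodule.Quotient.mk ⟨_, hu'⟩) =
          UniversalEnvelopingAlgebra.ι K x * sym (Submodule.Quotient.mk ⟨u, hu⟩)
            - sym (Submodule.Quotient.mk ⟨u, hu⟩) * UniversalEnvelopingAlgebra.ι K x) :=
  symmetrization_gModule_iso_general K g n G hG F hF Fprev hFprev
end

section
/- Let v be a semisimple Lie algebra over a field of characteristic zero, g = v ⊕ v with involution θ(x,y)=(y,x), h = {(x,x)}, p = {(x,-x)}. Every h-invariant polynomial function on p × p that is homogeneous of bidegree (k,ℓ) is the restriction to p × p of a g-invariant polynomial function on g × g homogeneous of bidegree (k,ℓ). (Restriction property for diagonal symmetric Lie algebras.) -/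
variable {K : Type*} [Field K] {v : Type*} [LieRing v] [LieAlgebra K v]

/-- The product Lie ring structure on `v × v` (componentwise bracket). -/
instance prodLieRing : LieRing (v × v) where
  bracket x y := (⁅x.1, y.1⁆, ⁅x.2, y.2⁆)
  add_lie x y z := Prod.ext (add_lie x.1 y.1 z.1) (add_lie x.2 y.2 z.2)
  lie_add x y z := Prod.ext (lie_add x.1 y.1 z.1) (lie_add x.2 y.2 z.2)
  lie_self x := Prod.ext (lie_self x.1) (lie_self x.2)
  leibniz_lie x y z := Prod.ext (leibniz_lie x.1 y.1 z.1) (leibniz_lie x.2 y.2 z.2)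

/-- The product Lie algebra structure on `v × v`. -/
instance prodLieAlgebra : LieAlgebra K (v × v) where
  lie_smul t x y := Prod.ext (lie_smul t x.1 y.1) (lie_smul t x.2 y.2)

/-!
The pullback of `F` along `(a, b) ↦ (a, -a)`, a projection of `v × v` onto `p`, restricts to `F`
on `p`. It is `g`-invariant because this projection turns the action of `(z₁, z₂) ∈ g` into the
action of `(z₁, z₁) ∈ h`: the second factor acts trivially and the first one through the diagonal.
-/

namespace MultilinearMap

variable {R M N : Type*} [CommRing R] [AddCommGroup M] [Module R M] [AddCommGroup N] [Module R N]
  {k ℓ : ℕ}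

def compLinearMap₂
    (F : MultilinearMap R (fun _ : Fin k => N) (MultilinearMap R (fun _ : Fin ℓ => N) R))
    (L : M →ₗ[R] N) :
    MultilinearMap R (fun _ : Fin k => M) (MultilinearMap R (fun _ : Fin ℓ => M) R) :=
  (compLinearMapₗ fun _ => L).compMultilinearMap (F.compLinearMap fun _ => L)

@[simp]
theorem compLinearMap₂_apply
    (F : MultilinearMap R (fun _ : Fin k => N) (MultilinearMap R (fun _ : Fin ℓ => N) R))
    (L : M →ₗ[R] N) (xs : Fin k → M) (ys : Fin ℓ → M) :
    F.compLinearMap₂ L xs ys = F (L ∘ xs) (L ∘ ys) :=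
  rfl

theorem compLinearMap₂_sum_update
    (F : MultilinearMap R (fun _ : Fin k => N) (MultilinearMap R (fun _ : Fin ℓ => N) R))
    (L : M →ₗ[R] N) (xs a : Fin k → M) (ys b : Fin ℓ → M) :
    (∑ i, F.compLinearMap₂ L (Function.update xs i (a i)) ys)
        + ∑ j, F.compLinearMap₂ L xs (Function.update ys j (b j))
      = (∑ i, F (Function.update (L ∘ xs) i (L (a i))) (L ∘ ys))
        + ∑ j, F (L ∘ xs) (Function.update (L ∘ ys) j (L (b j))) := by
  simp only [compLinearMap₂_apply, Function.comp_update]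

end MultilinearMap

section Antidiagonal

variable (K v)

def antidiagProj :
    v × v →ₗ[K] LinearMap.range ((LinearMap.id : v →ₗ[K] v).prod (-LinearMap.id)) :=
  ((LinearMap.id : v →ₗ[K] v).prod (-LinearMap.id)).rangeRestrict ∘ₗ LinearMap.fst K v v

variable {K v}

theorem antidiagProj_coe
    (x : LinearMap.range ((LinearMap.id : v →ₗ[K] v).prod (-LinearMap.id))) :
    antidiagProj K v (x : v × v) = x := by
  obtain ⟨_, u, rfl⟩ := x
  rfl

theorem antidiagProj_lie (z x : v × v) :
    (antidiagProj K v ⁅z, x⁆ : v × v) = ⁅((z.1, z.1) : v × v), (antidiagProj K v x : v × v)⁆ :=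
  Prod.ext rfl (lie_neg z.1 x.1).symm

end Antidiagonal

/-- A `(k, ℓ)`-homogeneous polynomial function is encoded by its polarization, a multilinear form
symmetric in its first `k` and in its last `ℓ` arguments. -/
theorem diagonal_restriction_property_general
    (h p : Submodule K (v × v))
    (hH : h = LinearMap.range ((LinearMap.id : v →ₗ[K] v).prod LinearMap.id))
    (hP : p = LinearMap.range ((LinearMap.id : v →ₗ[K] v).prod (-LinearMap.id)))
    (k ℓ : ℕ)
    (F : MultilinearMap K (fun _ : Fin k => ↥p) (MultilinearMap K (fun _ : Fin ℓ => ↥p) K))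
    -- `F` is symmetric in each of the two blocks of arguments
    (hFsym₁ : ∀ (σ : Equiv.Perm (Fin k)) (xs : Fin k → ↥p) (ys : Fin ℓ → ↥p),
      F (xs ∘ σ) ys = F xs ys)
    (hFsym₂ : ∀ (xs : Fin k → ↥p) (τ : Equiv.Perm (Fin ℓ)) (ys : Fin ℓ → ↥p),
      F xs (ys ∘ τ) = F xs ys)
    -- `F` is (infinitesimally) `h`-invariant
    (hFinv : ∀ z ∈ h, ∀ (xs : Fin k → ↥p) (ys : Fin ℓ → ↥p)
        (Bv : Fin k → ↥p) (Cv : Fin ℓ → ↥p),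
      (∀ i, (Bv i : v × v) = ⁅z, (xs i : v × v)⁆) →
      (∀ j, (Cv j : v × v) = ⁅z, (ys j : v × v)⁆) →
      (∑ i, F (Function.update xs i (Bv i)) ys)
        + (∑ j, F xs (Function.update ys j (Cv j))) = 0) :
    ∃ G : MultilinearMap K (fun _ : Fin k => v × v)
        (MultilinearMap K (fun _ : Fin ℓ => v × v) K),
      (∀ (σ : Equiv.Perm (Fin k)) (xs : Fin k → v × v) (ys : Fin ℓ → v × v),
        G (xs ∘ σ) ys = G xs ys) ∧
      (∀ (xs : Fin k → v × v) (τ : Equiv.Perm (Fin ℓ)) (ys : Fin ℓ → v × v),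
        G xs (ys ∘ τ) = G xs ys) ∧
      -- `G` is (infinitesimally) `g`-invariant
      (∀ (z : v × v) (xs : Fin k → v × v) (ys : Fin ℓ → v × v),
        (∑ i, G (Function.update xs i ⁅z, xs i⁆) ys)
          + (∑ j, G xs (Function.update ys j ⁅z, ys j⁆)) = 0) ∧
      -- `G` restricts to `F` on `p × p`
      (∀ (xs : Fin k → ↥p) (ys : Fin ℓ → ↥p),
        G (fun i => (xs i : v × v)) (fun j => (ys j : v × v)) = F xs ys) := by
  subst hH hP
  refine ⟨F.compLinearMap₂ (antidiagProj K v),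
    fun σ xs ys => hFsym₁ σ (antidiagProj K v ∘ xs) (antidiagProj K v ∘ ys),
    fun xs τ ys => hFsym₂ (antidiagProj K v ∘ xs) τ (antidiagProj K v ∘ ys),
    fun z xs ys => ?_, fun xs ys => ?_⟩
  · refine (F.compLinearMap₂_sum_update _ xs _ ys _).trans ?_
    exact hFinv _ ⟨z.1, rfl⟩ _ _ _ _ (fun i => antidiagProj_lie z (xs i))
      (fun j => antidiagProj_lie z (ys j))
  · simp only [MultilinearMap.compLinearMap₂_apply, Function.comp_def, antidiagProj_coe]

/-- restriction property for diagonal symmetric Lie algebras: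
for `v` semisimple, `g = v ⊕ v`, `h = {(x,x)}`, `p = {(x,-x)}`, every
`h`-invariant `(k,ℓ)`-homogeneous polynomial function on `p × p` — encoded in
characteristic zero by its polarization, a multilinear form symmetric in its
first `k` and last `ℓ` arguments — is the restriction to `p × p` of a
`g`-invariant `(k,ℓ)`-homogeneous polynomial function on `g × g`. -/
theorem diagonal_restriction_property
    [FiniteDimensional K v] [LieAlgebra.IsSemisimple K v]
    (h p : Submodule K (v × v))
    (hH : h = LinearMap.range ((LinearMap.id : v →ₗ[K] v).prod LinearMap.id))
    (hP : p = LinearMap.range ((LinearMap.id : v →ₗ[K] v).prod (-LinearMap.id)))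
    (k ℓ : ℕ)
    (F : MultilinearMap K (fun _ : Fin k => ↥p) (MultilinearMap K (fun _ : Fin ℓ => ↥p) K))
    -- `F` is symmetric in each of the two blocks of arguments
    (hFsym₁ : ∀ (σ : Equiv.Perm (Fin k)) (xs : Fin k → ↥p) (ys : Fin ℓ → ↥p),
      F (xs ∘ σ) ys = F xs ys)
    (hFsym₂ : ∀ (xs : Fin k → ↥p) (τ : Equiv.Perm (Fin ℓ)) (ys : Fin ℓ → ↥p),
      F xs (ys ∘ τ) = F xs ys)
    -- `F` is (infinitesimally) `h`-invariant
    (hFinv : ∀ z ∈ h, ∀ (xs : Fin k → ↥p) (ys : Fin ℓ → ↥p)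
        (Bv : Fin k → ↥p) (Cv : Fin ℓ → ↥p),
      (∀ i, (Bv i : v × v) = ⁅z, (xs i : v × v)⁆) →
      (∀ j, (Cv j : v × v) = ⁅z, (ys j : v × v)⁆) →
      (∑ i, F (Function.update xs i (Bv i)) ys)
        + (∑ j, F xs (Function.update ys j (Cv j))) = 0) :
    ∃ G : MultilinearMap K (fun _ : Fin k => v × v)
        (MultilinearMap K (fun _ : Fin ℓ => v × v) K),
      (∀ (σ : Equiv.Perm (Fin k)) (xs : Fin k → v × v) (ys : Fin ℓ → v × v),
        G (xs ∘ σ) ys = G xs ys) ∧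
      (∀ (xs : Fin k → v × v) (τ : Equiv.Perm (Fin ℓ)) (ys : Fin ℓ → v × v),
        G xs (ys ∘ τ) = G xs ys) ∧
      -- `G` is (infinitesimally) `g`-invariant
      (∀ (z : v × v) (xs : Fin k → v × v) (ys : Fin ℓ → v × v),
        (∑ i, G (Function.update xs i ⁅z, xs i⁆) ys)
          + (∑ j, G xs (Function.update ys j ⁅z, ys j⁆)) = 0) ∧
      -- `G` restricts to `F` on `p × p`
      (∀ (xs : Fin k → ↥p) (ys : Fin ℓ → ↥p),
        G (fun i => (xs i : v × v)) (fun j => (ys j : v × v)) = F xs ys) :=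
  diagonal_restriction_property_general h p hH hP k ℓ F hFsym₁ hFsym₂ hFinv
end
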